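/- arXiv:1806.11238 — 3 statements merged into one kernel-verified Lean document; each statement's English description precedes it below -/
import Mathlib

section
/- In the same discrete scheme setting, for all $s, t \in \{0,\dots,n\}$ with $s \leq t$ and all $x \in \mathbb{R}$, $|v_n(s, x) - v_n(t, x)| \leq \bar\sigma^{\beta} ((t-s)/n)^{\beta/2}$. -/
/-!
Each step of the scheme averages translates of the next value function and takes a supremum,
so it preserves every translation-invariant modulus of continuity; hence every `v k` is
`β`-Hölder like `φ`. By concavity, `|z| ^ β = (z ^ 2) ^ (β / 2)` lies below the tangent line
`A + B z ^ 2` of `u ↦ u ^ (β / 2)` at any point `w > 0`. A quadratic modulus `A + B (x - y) ^ 2`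
around a fixed point degrades by only `B σ² / n` per step backwards in time, because the
increments are centred with variance at most `σ²`. Thus
`|v s x - v t x| ≤ A + B σ² (t - s) / n`, and the tangent point `w = σ² (t - s) / n` turns the
right-hand side into `w ^ (β / 2)`.
-/

open MeasureTheory Set

theorem rpow_le_tangent {p : ℝ} (hp0 : 0 ≤ p) (hp1 : p ≤ 1) {u₀ : ℝ} (hu₀ : 0 < u₀)
    {u : ℝ} (hu : 0 ≤ u) :
    u ^ p ≤ (1 - p) * u₀ ^ p + p * u₀ ^ (p - 1) * u := by
  have hbern := rpow_one_add_le_one_add_mul_self (s := u / u₀ - 1)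
    (by linarith [div_nonneg hu hu₀.le]) hp0 hp1
  rw [add_sub_cancel, Real.div_rpow hu hu₀.le, div_le_iff₀ (by positivity)] at hbern
  rw [Real.rpow_sub_one hu₀.ne']
  calc u ^ p ≤ (1 + p * (u / u₀ - 1)) * u₀ ^ p := hbern
    _ = (1 - p) * u₀ ^ p + p * (u₀ ^ p / u₀) * u := by field_simp; ring

theorem le_rpow_of_forall_le_tangent {p : ℝ} (hp0 : 0 < p) {u₀ a : ℝ}
    (hu₀ : 0 ≤ u₀) (h : ∀ w > 0, a ≤ (1 - p) * w ^ p + p * w ^ (p - 1) * u₀) :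
    a ≤ u₀ ^ p := by
  rcases hu₀.lt_or_eq with hu₀ | rfl
  · have hu₀p : u₀ ^ (p - 1) * u₀ = u₀ ^ p := by
      rw [Real.rpow_sub_one hu₀.ne', div_mul_cancel₀ _ hu₀.ne']
    have := h u₀ hu₀
    rwa [mul_assoc p, hu₀p, ← add_mul, sub_add_cancel, one_mul] at this
  · rw [Real.zero_rpow hp0.ne']
    by_contra! ha
    -- at `w = a ^ (1 / p)` the tangent bound reads `a ≤ (1 - p) * a`
    have := h (a ^ (1 / p)) (by positivity)
    rw [← Real.rpow_mul ha.le, one_div_mul_cancel hp0.ne', Real.rpow_one, mul_zero,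
      add_zero] at this
    nlinarith

theorem abs_ciSup_sub_ciSup_le {ι : Type*} [Nonempty ι] {f g : ι → ℝ} {b : ℝ}
    (hf : BddAbove (range f)) (hg : BddAbove (range g)) (h : ∀ i, |f i - g i| ≤ b) :
    |(⨆ i, f i) - ⨆ i, g i| ≤ b := by
  have hfg : (⨆ i, f i) ≤ (⨆ i, g i) + b := ciSup_le fun i => by
    linarith [(abs_le.mp (h i)).2, le_ciSup hg i]
  have hgf : (⨆ i, g i) ≤ (⨆ i, f i) + b := ciSup_le fun i => by
    linarith [(abs_le.mp (h i)).1, le_ciSup hf i]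
  exact abs_le.mpr ⟨by linarith, by linarith⟩

theorem abs_integral_sub_integral_le {Ω : Type*} [MeasurableSpace Ω] {μ : Measure Ω}
    {F G g : Ω → ℝ} (hF : Integrable F μ) (hG : Integrable G μ) (hg : Integrable g μ)
    (h : ∀ ω, |F ω - G ω| ≤ g ω) :
    |∫ ω, F ω ∂μ - ∫ ω, G ω ∂μ| ≤ ∫ ω, g ω ∂μ := by
  rw [← integral_sub hF hG]
  exact norm_integral_le_of_norm_le hg (.of_forall fun ω => (Real.norm_eq_abs _).trans_le (h ω))

theorem integrable_add_div_sq {Ω : Type*} [MeasurableSpace Ω] {μ : Measure Ω}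
    [IsFiniteMeasure μ] {X : Ω → ℝ} (hX : MemLp X 2 μ) (c r : ℝ) :
    Integrable (fun ω => (c + X ω / r) ^ 2) μ :=
  ((memLp_const c).add (hX.mul_const r⁻¹)).integrable_sq

theorem integral_add_div_sq_le {Ω : Type*} [MeasurableSpace Ω] {μ : Measure Ω}
    [IsProbabilityMeasure μ] {X : Ω → ℝ} (hX : MemLp X 2 μ) (hcent : ∫ ω, X ω ∂μ = 0)
    {σ : ℝ} (hvar : ∫ ω, X ω ^ 2 ∂μ ≤ σ ^ 2) (c r : ℝ) :
    ∫ ω, (c + X ω / r) ^ 2 ∂μ ≤ c ^ 2 + σ ^ 2 / r ^ 2 := by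
  have hexp : (fun ω => (c + X ω / r) ^ 2)
      = fun ω => c ^ 2 + (2 * c / r) * X ω + X ω ^ 2 / r ^ 2 := by
    funext ω; ring
  have hlin : Integrable (fun ω => (2 * c / r) * X ω) μ := (hX.integrable one_le_two).const_mul _
  have hsq : Integrable (fun ω => X ω ^ 2 / r ^ 2) μ := hX.integrable_sq.div_const _
  have haff : Integrable (fun ω => c ^ 2 + (2 * c / r) * X ω) μ := (integrable_const _).add hlin
  rw [hexp, integral_add haff hsq,
    integral_add (integrable_const _) hlin, integral_const, integral_const_mul,
    integral_div, hcent, probReal_univ, one_smul, mul_zero, add_zero]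
  gcongr

section DiscreteScheme

variable {ι : Type*} {Ω : ι → Type*} [∀ i, MeasurableSpace (Ω i)]
  {μ : ∀ i, Measure (Ω i)} {ξ : ∀ i, Ω i → ℝ} {n : ℕ} {v : ℕ → ℝ → ℝ}

structure IsDiscreteScheme (μ : ∀ i, Measure (Ω i)) (ξ : ∀ i, Ω i → ℝ) (n : ℕ)
    (v : ℕ → ℝ → ℝ) : Prop where
  integrable : ∀ (k : ℕ) (i : ι) (x : ℝ),
    Integrable (fun ω => v (k + 1) (x + ξ i ω / Real.sqrt n)) (μ i)
  bddAbove : ∀ (k : ℕ) (x : ℝ),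
    BddAbove (range fun i : ι => ∫ ω, v (k + 1) (x + ξ i ω / Real.sqrt n) ∂(μ i))
  eq_iSup : ∀ k < n, ∀ x : ℝ,
    v k x = ⨆ i : ι, ∫ ω, v (k + 1) (x + ξ i ω / Real.sqrt n) ∂(μ i)

variable [Nonempty ι] [∀ i, IsProbabilityMeasure (μ i)]

theorem IsDiscreteScheme.abs_sub_le_of_terminal (hv : IsDiscreteScheme μ ξ n v)
    {w : ℝ → ℝ} (hw : ∀ x y, |v n x - v n y| ≤ w (x - y)) {k : ℕ} (hk : k ≤ n)
    (x y : ℝ) :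
    |v k x - v k y| ≤ w (x - y) := by
  induction hk using Nat.decreasingInduction generalizing x y with
  | self => exact hw x y
  | of_succ k hk ih =>
    rw [hv.eq_iSup k hk x, hv.eq_iSup k hk y]
    refine abs_ciSup_sub_ciSup_le (hv.bddAbove k x) (hv.bddAbove k y) fun i => ?_
    have := abs_integral_sub_integral_le (hv.integrable k i x) (hv.integrable k i y)
      (integrable_const (w (x - y))) fun ω => by
        simpa only [add_sub_add_right_eq_sub] using ih (x + ξ i ω / √n) (y + ξ i ω / √n)
    simpa only [integral_const, probReal_univ, one_smul] using this

theorem IsDiscreteScheme.abs_sub_le_of_quadratic (hv : IsDiscreteScheme μ ξ n v)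
    (hξ : ∀ i, MemLp (ξ i) 2 (μ i)) (hcent : ∀ i, ∫ ω, ξ i ω ∂(μ i) = 0) {σ : ℝ}
    (hvar : ∀ i, ∫ ω, ξ i ω ^ 2 ∂(μ i) ≤ σ ^ 2) {t : ℕ} (ht : t ≤ n) {A B y : ℝ}
    (hB : 0 ≤ B) (hquad : ∀ z, |v t z - v t y| ≤ A + B * (z - y) ^ 2) {k : ℕ} (hk : k ≤ t) (x : ℝ) :
    |v k x - v t y| ≤ A + B * ((x - y) ^ 2 + σ ^ 2 * ((t - k : ℝ) / n)) := by
  induction hk using Nat.decreasingInduction generalizing x with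
  | self => simpa using hquad x
  | of_succ k hk ih =>
    have hkn : k < n := hk.trans_le ht
    rw [hv.eq_iSup k hkn x, ← ciSup_const (ι := ι) (a := v t y)]
    refine abs_ciSup_sub_ciSup_le (hv.bddAbove k x) (by simp) fun i => ?_
    set K : ℝ := σ ^ 2 * ((t - (k + 1 : ℕ) : ℝ) / n)
    have hsq := integrable_add_div_sq (hξ i) (x - y) √n
    have hsqK : Integrable (fun ω => (x - y + ξ i ω / √n) ^ 2 + K) (μ i) :=
      hsq.add (integrable_const K)
    have hbound : Integrable (fun ω => A + B * ((x - y + ξ i ω / √n) ^ 2 + K)) (μ i) :=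
      (integrable_const A).add (hsqK.const_mul B)
    have hstep := abs_integral_sub_integral_le (hv.integrable k i x) (integrable_const (v t y))
      hbound fun ω => by simpa only [add_sub_right_comm x] using ih (x + ξ i ω / √n)
    have hmom := integral_add_div_sq_le (hξ i) (hcent i) (hvar i) (x - y) √n
    rw [Real.sq_sqrt n.cast_nonneg] at hmom
    have hmean : ∫ ω, A + B * ((x - y + ξ i ω / √n) ^ 2 + K) ∂μ i
        = A + B * (∫ ω, (x - y + ξ i ω / √n) ^ 2 ∂μ i + K) := by
      rw [integral_add (integrable_const A) (hsqK.const_mul B), integral_const_mul,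
        integral_add hsq (integrable_const K)]
      simp only [integral_const, probReal_univ, one_smul]
    rw [integral_const, probReal_univ, one_smul, hmean] at hstep
    calc _ ≤ A + B * (∫ ω, (x - y + ξ i ω / √n) ^ 2 ∂μ i + K) := hstep
      _ ≤ A + B * ((x - y) ^ 2 + σ ^ 2 / n + K) := by gcongr
      _ = A + B * ((x - y) ^ 2 + σ ^ 2 * ((t - k : ℝ) / n)) := by
        simp only [K]; push_cast; ring

end DiscreteScheme

theorem discrete_scheme_time_holder_general {ι : Type*} [Nonempty ι]
    (Ω : ι → Type*) [∀ i, MeasurableSpace (Ω i)]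
    (μ : ∀ i, Measure (Ω i)) (hμ : ∀ i, IsProbabilityMeasure (μ i))
    (ξ : ∀ i, Ω i → ℝ) (hmeas : ∀ i, Measurable (ξ i))
    (hξ2 : ∀ i, Integrable (fun ω => (ξ i ω) ^ 2) (μ i))
    (hcent : ∀ i, ∫ ω, ξ i ω ∂(μ i) = 0)
    (σu : ℝ) (hσu : 0 ≤ σu)
    (hvar : ∀ i, ∫ ω, (ξ i ω) ^ 2 ∂(μ i) ≤ σu ^ 2)
    (β : ℝ) (hβ0 : 0 < β) (hβ1 : β ≤ 1)
    (φ : ℝ → ℝ) (hφ : ∀ x y : ℝ, |φ x - φ y| ≤ |x - y| ^ β)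
    (n : ℕ) (v : ℕ → ℝ → ℝ)
    (hterm : ∀ x, v n x = φ x)
    (hint : ∀ (k : ℕ) (i : ι) (x : ℝ),
      Integrable (fun ω => v (k + 1) (x + ξ i ω / Real.sqrt n)) (μ i))
    (hbdd : ∀ (k : ℕ) (x : ℝ),
      BddAbove (range fun i : ι => ∫ ω, v (k + 1) (x + ξ i ω / Real.sqrt n) ∂(μ i)))
    (hrec : ∀ k < n, ∀ x : ℝ,
      v k x = ⨆ i : ι, ∫ ω, v (k + 1) (x + ξ i ω / Real.sqrt n) ∂(μ i))
 :
    ∀ s t : ℕ, s ≤ t → t ≤ n → ∀ x : ℝ,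
      |v s x - v t x| ≤ σu ^ β * (((t : ℝ) - (s : ℝ)) / n) ^ (β / 2) := by
  intro s t hst htn x
  have := hμ
  have hξ (i : ι) : MemLp (ξ i) 2 (μ i) :=
    (memLp_two_iff_integrable_sq (hmeas i).aestronglyMeasurable).mpr (hξ2 i)
  have hv : IsDiscreteScheme μ ξ n v := ⟨hint, hbdd, hrec⟩
  have hsq_rpow (a : ℝ) (ha : 0 ≤ a) : a ^ β = (a ^ 2) ^ (β / 2) := by
    rw [← Real.rpow_natCast, ← Real.rpow_mul ha]; congr 1; push_cast; ring
  have hspace (z : ℝ) : |v t z - v t x| ≤ ((z - x) ^ 2) ^ (β / 2) := by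
    refine hv.abs_sub_le_of_terminal (w := fun d => (d ^ 2) ^ (β / 2)) (fun y y' => ?_) htn z x
    rw [hterm, hterm, ← sq_abs, ← hsq_rpow _ (abs_nonneg _)]
    exact hφ y y'
  have hts : (0 : ℝ) ≤ (t - s : ℝ) / n :=
    div_nonneg (sub_nonneg.mpr (Nat.cast_le.mpr hst)) n.cast_nonneg
  rw [hsq_rpow σu hσu, ← Real.mul_rpow (sq_nonneg σu) hts]
  refine le_rpow_of_forall_le_tangent (by positivity) (mul_nonneg (sq_nonneg σu) hts)
    fun w hw => ?_
  have htangent (z : ℝ) := (hspace z).trans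
    (rpow_le_tangent (by positivity) (by linarith) hw (sq_nonneg (z - x)))
  simpa using hv.abs_sub_le_of_quadratic hξ hcent hvar htn (by positivity) htangent hst x

/-- Time-Hölder regularity of Peng's discrete dynamic programming scheme. -/
theorem discrete_scheme_time_holder {ι : Type*} [Nonempty ι]
    (Ω : ι → Type*) [∀ i, MeasurableSpace (Ω i)]
    (μ : ∀ i, Measure (Ω i)) (hμ : ∀ i, IsProbabilityMeasure (μ i))
    (ξ : ∀ i, Ω i → ℝ) (hmeas : ∀ i, Measurable (ξ i))
    (hξ2 : ∀ i, Integrable (fun ω => (ξ i ω) ^ 2) (μ i))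
    (hcent : ∀ i, ∫ ω, ξ i ω ∂(μ i) = 0)
    (σu : ℝ) (hσu : 0 ≤ σu)
    (hvar : ∀ i, ∫ ω, (ξ i ω) ^ 2 ∂(μ i) ≤ σu ^ 2)
    (β : ℝ) (hβ0 : 0 < β) (hβ1 : β ≤ 1)
    (φ : ℝ → ℝ) (hφ : ∀ x y : ℝ, |φ x - φ y| ≤ |x - y| ^ β)
    (n : ℕ) (hn : 1 ≤ n) (v : ℕ → ℝ → ℝ)
    (hterm : ∀ x, v n x = φ x)
    (hint : ∀ (k : ℕ) (i : ι) (x : ℝ),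
      Integrable (fun ω => v (k + 1) (x + ξ i ω / Real.sqrt n)) (μ i))
    (hbdd : ∀ (k : ℕ) (x : ℝ),
      BddAbove (range fun i : ι => ∫ ω, v (k + 1) (x + ξ i ω / Real.sqrt n) ∂(μ i)))
    (hrec : ∀ k < n, ∀ x : ℝ,
      v k x = ⨆ i : ι, ∫ ω, v (k + 1) (x + ξ i ω / Real.sqrt n) ∂(μ i))
 :
    ∀ s t : ℕ, s ≤ t → t ≤ n → ∀ x : ℝ,
      |v s x - v t x| ≤ σu ^ β * (((t : ℝ) - (s : ℝ)) / n) ^ (β / 2) :=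
  discrete_scheme_time_holder_general Ω μ hμ ξ hmeas hξ2 hcent σu hσu hvar β hβ0 hβ1 φ hφ n v hterm
    hint hbdd hrec
end

section
/- With $v(t,x) = \sup_{\sigma_\cdot \in \Sigma} E\,\phi\big(x + \int_t^1 \sigma_r\, dw_r\big)$ as above ($\phi$ $\beta$-Hölder with constant 1, $\sigma$-processes valued in $[\underline\sigma, \bar\sigma]$), for all $s, t \in [0,1]$ and $x \in \mathbb{R}$: $|v(t,x) - v(s,x)| \leq \bar\sigma^{\beta} |t-s|^{\beta/2}$. -/
open MeasureTheory Set Filter Topology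

/-! For `s ≤ t` the Bellman principle writes `v s x` as a supremum over controls of
`E v(t, x + X)`, with `X = ∫_s^t σ_r dw_r`. Each of these expectations is within
`E |X|^β ≤ (E X²)^{β/2} ≤ σ̄^β (t - s)^{β/2}` of `v t x`, by the spatial Hölder bound, Jensen's
inequality for the concave map `y ↦ y^{β/2}` and the Itô isometry; hence so is their supremum. -/

theorem continuous_of_abs_sub_le_abs_sub_rpow {g : ℝ → ℝ} {β : ℝ} (hβ : 0 < β)
    (hg : ∀ x y, |g x - g y| ≤ |x - y| ^ β) : Continuous g := by
  refine continuous_iff_continuousAt.2 fun x => ?_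
  rw [ContinuousAt, tendsto_iff_norm_sub_tendsto_zero]
  refine squeeze_zero (fun _ => norm_nonneg _) (fun y => hg y x) ?_
  have hlim : Tendsto (fun y => |y - x| ^ β) (𝓝 x) (𝓝 (|x - x| ^ β)) :=
    ((continuous_abs.comp (continuous_sub_right x)).rpow_const fun _ => Or.inr hβ.le).tendsto x
  simpa [Real.zero_rpow hβ.ne'] using hlim

theorem abs_ciSup_sub_le {ι : Type*} [Nonempty ι] {F : ι → ℝ} {c C : ℝ}
    (h : ∀ i, |F i - c| ≤ C) : |(⨆ i, F i) - c| ≤ C := by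
  have hle : ∀ i, F i ≤ c + C := fun i => by linarith [(abs_le.1 (h i)).2]
  obtain ⟨i⟩ := ‹Nonempty ι›
  have hge := le_ciSup ⟨c + C, forall_mem_range.2 hle⟩ i
  refine abs_le.2 ⟨?_, ?_⟩
  · linarith [(abs_le.1 (h i)).1]
  · linarith [ciSup_le hle]

section Moments

variable {Ω : Type*} [MeasurableSpace Ω] {μ : Measure Ω} {f : Ω → ℝ} {β : ℝ}

theorem integrable_abs_rpow_of_integrable_sq [IsFiniteMeasure μ]
    (hf : AEStronglyMeasurable f μ) (hf2 : Integrable (fun ω => f ω ^ 2) μ)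
    (hβ0 : 0 ≤ β) (hβ2 : β ≤ 2) : Integrable (fun ω => |f ω| ^ β) μ := by
  have hLp : MemLp f (ENNReal.ofReal β) μ :=
    ((memLp_two_iff_integrable_sq hf).2 hf2).mono_exponent
      (by simpa using ENNReal.ofReal_le_ofReal hβ2)
  simpa [ENNReal.toReal_ofReal hβ0] using hLp.integrable_norm_rpow'

theorem integral_abs_rpow_le_integral_sq_rpow [IsProbabilityMeasure μ]
    (hf : AEStronglyMeasurable f μ) (hf2 : Integrable (fun ω => f ω ^ 2) μ)
    (hβ0 : 0 ≤ β) (hβ2 : β ≤ 2) : ∫ ω, |f ω| ^ β ∂μ ≤ (∫ ω, f ω ^ 2 ∂μ) ^ (β / 2) := by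
  have hsq : ∀ ω, (f ω ^ 2) ^ (β / 2) = |f ω| ^ β := fun ω => by
    rw [← sq_abs, ← Real.rpow_natCast, ← Real.rpow_mul (abs_nonneg _)]
    ring_nf
  simp_rw [← hsq]
  refine (Real.concaveOn_rpow (by linarith) (by linarith)).le_map_integral
    (Real.continuous_rpow_const (by linarith)).continuousOn isClosed_Ici
    (Eventually.of_forall fun ω => mem_Ici.2 (sq_nonneg _)) hf2 ?_
  simpa only [Function.comp_def, hsq] using integrable_abs_rpow_of_integrable_sq hf hf2 hβ0 hβ2

variable [IsProbabilityMeasure μ] {g : ℝ → ℝ}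

theorem integrable_comp_add_of_abs_sub_le_abs_sub_rpow (hβ : 0 < β)
    (hg : ∀ x y, |g x - g y| ≤ |x - y| ^ β) (hf : AEStronglyMeasurable f μ)
    (hfβ : Integrable (fun ω => |f ω| ^ β) μ) (x : ℝ) :
    Integrable (fun ω => g (x + f ω)) μ := by
  refine ((integrable_const |g x|).add hfβ).mono'
    ((continuous_of_abs_sub_le_abs_sub_rpow hβ hg).comp_aestronglyMeasurable
      (hf.const_add x)) (Eventually.of_forall fun ω => ?_)
  have := hg (x + f ω) x
  rw [add_sub_cancel_left] at this
  simp only [Real.norm_eq_abs, Pi.add_apply]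
  linarith [abs_sub_abs_le_abs_sub (g (x + f ω)) (g x)]

theorem abs_integral_comp_add_sub_le_integral_sq_rpow (hβ0 : 0 < β) (hβ2 : β ≤ 2)
    (hg : ∀ x y, |g x - g y| ≤ |x - y| ^ β) (hf : AEStronglyMeasurable f μ)
    (hf2 : Integrable (fun ω => f ω ^ 2) μ) (x : ℝ) :
    |(∫ ω, g (x + f ω) ∂μ) - g x| ≤ (∫ ω, f ω ^ 2 ∂μ) ^ (β / 2) := by
  have hfβ := integrable_abs_rpow_of_integrable_sq hf hf2 hβ0.le hβ2
  have hint := integrable_comp_add_of_abs_sub_le_abs_sub_rpow hβ0 hg hf hfβ x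
  calc |(∫ ω, g (x + f ω) ∂μ) - g x|
      = |∫ ω, (g (x + f ω) - g x) ∂μ| := by
        rw [integral_sub hint (integrable_const _), integral_const, probReal_univ, one_smul]
    _ ≤ ∫ ω, |g (x + f ω) - g x| ∂μ := abs_integral_le_integral_abs
    _ ≤ ∫ ω, |f ω| ^ β ∂μ := integral_mono (hint.sub (integrable_const _)).abs hfβ
        fun ω => by simpa using hg (x + f ω) x
    _ ≤ (∫ ω, f ω ^ 2 ∂μ) ^ (β / 2) := integral_abs_rpow_le_integral_sq_rpow hf hf2 hβ0.le hβ2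

end Moments

/-- `X σ s t` stands for the stochastic integral `∫_s^t σ_r dw_r` of the control `σ ∈ S`. -/
theorem value_function_time_holder_general {Ω : Type*} [MeasurableSpace Ω]
    (P : Measure Ω) [IsProbabilityMeasure P]
    {S : Type*} [Nonempty S] (X : S → ℝ → ℝ → Ω → ℝ)
    (σu β : ℝ) (hσu : 0 ≤ σu) (hβ0 : 0 < β) (hβ1 : β ≤ 1)
    (hXmeas : ∀ (σ : S) (s t : ℝ), Measurable (X σ s t))
    (hX2 : ∀ (σ : S) (s t : ℝ), Integrable (fun ω => (X σ s t ω) ^ 2) P)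
    (hiso : ∀ (σ : S) (s t : ℝ), 0 ≤ s → s ≤ t → t ≤ 1 →
      ∫ ω, (X σ s t ω) ^ 2 ∂P ≤ σu ^ 2 * (t - s))
    (v : ℝ → ℝ → ℝ)
    (hvx : ∀ t ∈ Icc (0 : ℝ) 1, ∀ x y : ℝ, |v t x - v t y| ≤ |x - y| ^ β)
    (hbell : ∀ s t : ℝ, 0 ≤ s → s ≤ t → t ≤ 1 → ∀ x : ℝ,
      v s x = ⨆ σ : S, ∫ ω, v t (x + X σ s t ω) ∂P) :
    ∀ s ∈ Icc (0 : ℝ) 1, ∀ t ∈ Icc (0 : ℝ) 1, ∀ x : ℝ,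
      |v t x - v s x| ≤ σu ^ β * |t - s| ^ (β / 2) := by
  intro s hs t ht x
  wlog hst : s ≤ t generalizing s t
  · rw [abs_sub_comm, abs_sub_comm t]
    exact this t ht s hs (le_of_not_ge hst)
  have hscale : (σu ^ 2 * (t - s)) ^ (β / 2) = σu ^ β * |t - s| ^ (β / 2) := by
    rw [Real.mul_rpow (by positivity) (by linarith), abs_of_nonneg (by linarith),
      ← Real.rpow_natCast, ← Real.rpow_mul hσu]
    ring_nf
  rw [hbell s t hs.1 hst ht.2 x, abs_sub_comm, ← hscale]
  refine abs_ciSup_sub_le fun σ => ?_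
  calc |(∫ ω, v t (x + X σ s t ω) ∂P) - v t x|
      ≤ (∫ ω, X σ s t ω ^ 2 ∂P) ^ (β / 2) :=
        abs_integral_comp_add_sub_le_integral_sq_rpow hβ0 (by linarith) (hvx t ht)
          (hXmeas σ s t).aestronglyMeasurable (hX2 σ s t) x
    _ ≤ (σu ^ 2 * (t - s)) ^ (β / 2) :=
        Real.rpow_le_rpow (integral_nonneg fun ω => sq_nonneg _) (hiso σ s t hs.1 hst ht.2)
          (by linarith)

/-- Time-Hölder regularity of the value function via the Bellman principle.
Here `S` is the abstract set of controls, `X σ s t` is the stochastic integral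
`∫_s^t σ_r dw_r` (centered, with `E X² ≤ σ̄²(t-s)` by the Itô isometry), and the
dynamic programming principle `hbell` is assumed. -/
theorem value_function_time_holder {Ω : Type*} [MeasurableSpace Ω]
    (P : Measure Ω) [IsProbabilityMeasure P]
    {S : Type*} [Nonempty S] (X : S → ℝ → ℝ → Ω → ℝ)
    (σu β : ℝ) (hσu : 0 ≤ σu) (hβ0 : 0 < β) (hβ1 : β ≤ 1)
    (hXmeas : ∀ (σ : S) (s t : ℝ), Measurable (X σ s t))
    (hX2 : ∀ (σ : S) (s t : ℝ), Integrable (fun ω => (X σ s t ω) ^ 2) P)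
    (hiso : ∀ (σ : S) (s t : ℝ), 0 ≤ s → s ≤ t → t ≤ 1 →
      ∫ ω, (X σ s t ω) ^ 2 ∂P ≤ σu ^ 2 * (t - s))
    (v : ℝ → ℝ → ℝ)
    (hvx : ∀ t ∈ Icc (0 : ℝ) 1, ∀ x y : ℝ, |v t x - v t y| ≤ |x - y| ^ β)
    (hvint : ∀ (σ : S) (s t x : ℝ), Integrable (fun ω => v t (x + X σ s t ω)) P)
    (hvbdd : ∀ s t x : ℝ, BddAbove (range fun σ : S => ∫ ω, v t (x + X σ s t ω) ∂P))
    (hbell : ∀ s t : ℝ, 0 ≤ s → s ≤ t → t ≤ 1 → ∀ x : ℝ,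
      v s x = ⨆ σ : S, ∫ ω, v t (x + X σ s t ω) ∂P) :
    ∀ s ∈ Icc (0 : ℝ) 1, ∀ t ∈ Icc (0 : ℝ) 1, ∀ x : ℝ,
      |v t x - v s x| ≤ σu ^ β * |t - s| ^ (β / 2) :=
  value_function_time_holder_general P X σu β hσu hβ0 hβ1 hXmeas hX2 hiso v hvx hbell
end

section
/- Let $v : [0,1]\times\mathbb{R} \to \mathbb{R}$ be such that for every constant $\sigma \in [\underline\sigma, \bar\sigma]$, every $t, \delta \geq 0$ with $t + \delta \leq 1$, and every $x$: $v(t,x) \geq E\, v(t+\delta, x + \sigma w_{\delta})$, where $w_\delta$ is a centered Gaussian with variance $\delta$. Suppose $v$ is $C^{1,2}$ on $[0,T]\times\mathbb{R}$ with continuous $\partial_t v$ and $D^2 v$, for some $T < 1$. Then on $[0,T]\times\mathbb{R}$, $\partial_t v + \tfrac12 \sigma^2 D^2 v \leq 0$ for every $\sigma \in [\underline\sigma, \bar\sigma]$. -/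
/-!
Write the Gaussian step as `w_δ = √δ z` with `z` standard normal. After subtracting the
mean-zero first-order term `vx(t,x) σ √δ z`, the quotient `(E v(t+δ, x+σw_δ) - v(t,x)) / δ`
becomes the expectation of a function of `z` that converges pointwise to
`vt(t,x) + σ²/2 vxx(t,x) z²` (first-order expansion in time, second-order Taylor expansion in
space) and is dominated by `C (1 + σ² z²)`. Dominated convergence and `E z² = 1` give
`vt + σ²/2 vxx` as the limit, and the supersolution inequality makes every quotient `≤ 0`.
-/

open MeasureTheory Set ProbabilityTheory Filter Asymptotics
open scoped Topology NNReal

theorem abs_sub_sub_mul_le_of_abs_deriv_sub_le {f f' : ℝ → ℝ} {a b c ε : ℝ}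
    (hf : ∀ u ∈ uIcc a b, HasDerivAt f (f' u) u) (hε : ∀ u ∈ uIcc a b, |f' u - c| ≤ ε) :
    |f b - f a - c * (b - a)| ≤ ε * |b - a| := by
  have h := (convex_uIcc a b).norm_image_sub_le_of_norm_hasDerivWithin_le
    (f := fun u => f u - c * u) (f' := fun u => f' u - c)
    (fun u hu => ((hf u hu).sub (by simpa using (hasDerivAt_id u).const_mul c)).hasDerivWithinAt)
    hε left_mem_uIcc right_mem_uIcc
  simp only [Real.norm_eq_abs] at h
  convert h using 2
  ring

theorem isLittleO_taylor_two {f f' f'' : ℝ → ℝ} {x₀ : ℝ} (hf : ∀ x, HasDerivAt f (f' x) x)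
    (hf' : ∀ x, HasDerivAt f' (f'' x) x) (hc : ContinuousAt f'' x₀) :
    (fun x => f x - f x₀ - f' x₀ * (x - x₀) - f'' x₀ / 2 * (x - x₀) ^ 2)
      =o[𝓝 x₀] fun x => (x - x₀) ^ 2 := by
  have hlin : ∀ c x, HasDerivAt (fun x => c * (x - x₀)) c x := fun c x => by
    simpa using ((hasDerivAt_id x).sub_const x₀).const_mul c
  have hsq : ∀ x, HasDerivAt (fun x => f'' x₀ / 2 * (x - x₀) ^ 2) (f'' x₀ * (x - x₀)) x :=
    fun x => by
      refine ((((hasDerivAt_id' x).sub_const x₀).fun_pow 2).const_mul (f'' x₀ / 2)).congr_deriv ?_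
      ring
  have h0 : (fun x => f'' x - f'' x₀) =o[𝓝[univ] x₀] fun x => (x - x₀) ^ 0 := by
    simpa [nhdsWithin_univ] using tendsto_sub_nhds_zero_iff.2 hc.tendsto
  have h1 := convex_univ.isLittleO_pow_succ_real (mem_univ x₀)
    (f := fun x => f' x - f'' x₀ * (x - x₀))
    (fun x _ => ((hf' x).sub (hlin _ x)).hasDerivWithinAt) h0
  have h2 := convex_univ.isLittleO_pow_succ_real (mem_univ x₀)
    (f := fun x => f x - f' x₀ * (x - x₀) - f'' x₀ / 2 * (x - x₀) ^ 2)
    (fun x _ => (((hf x).sub (hlin _ x)).sub (hsq x)).hasDerivWithinAt)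
    (n := 1) (by simpa [sub_right_comm] using h1)
  simpa [nhdsWithin_univ, sub_right_comm] using h2

theorem isLittleO_sub_sub_mul_of_continuousAt {f ft : ℝ → ℝ → ℝ} {t x : ℝ} {b : ℝ → ℝ}
    (hf : ∀ s y, HasDerivAt (fun s => f s y) (ft s y) s)
    (hc : ContinuousAt (Function.uncurry ft) (t, x)) (hb : Tendsto b (𝓝 0) (𝓝 x)) :
    (fun δ => f (t + δ) (b δ) - f t (b δ) - ft t x * δ) =o[𝓝 0] fun δ => δ := by
  rw [isLittleO_iff]
  intro ε hε
  obtain ⟨r, hr, hft⟩ := Metric.continuousAt_iff.1 hc ε hε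
  filter_upwards [Metric.ball_mem_nhds (0 : ℝ) hr, hb (Metric.ball_mem_nhds x hr)]
    with δ hδ hbδ
  have h := abs_sub_sub_mul_le_of_abs_deriv_sub_le (f := fun s => f s (b δ))
    (a := t) (b := t + δ) (c := ft t x)
    (fun s _ => hf s (b δ)) fun s hs => (hft (x := (s, b δ)) ?_).le
  · simpa using h
  · have hst := abs_sub_left_of_mem_uIcc hs
    rw [add_sub_cancel_left] at hst
    rw [Prod.dist_eq, Real.dist_eq]
    exact max_lt (hst.trans_lt (by simpa using hδ)) hbδ

theorem integral_gaussianReal_eq_integral_sqrt_mul {E : Type*} [NormedAddCommGroup E]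
    [NormedSpace ℝ E] {δ : ℝ} (hδ : 0 < δ) (f : ℝ → E) :
    ∫ y, f y ∂gaussianReal 0 δ.toNNReal = ∫ z, f (√δ * z) ∂gaussianReal 0 1 := by
  have hmap : (gaussianReal 0 1).map (√δ * ·) = gaussianReal 0 δ.toNNReal := by
    rw [gaussianReal_map_const_mul, mul_zero, mul_one]
    congr
    rw [Real.sq_sqrt hδ.le, max_eq_left hδ.le]
  rw [← hmap]
  exact (Homeomorph.mulLeft₀ _ (Real.sqrt_pos.2 hδ).ne').measurableEmbedding.integral_map f

theorem integral_sq_gaussianReal (v : ℝ≥0) : ∫ z, z ^ 2 ∂gaussianReal 0 v = v := by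
  simpa using (variance_of_integral_eq_zero (X := id) aemeasurable_id
    (integral_id_gaussianReal (μ := 0) (v := v))).symm

noncomputable def compensatedQuot (v vx : ℝ → ℝ → ℝ) (σ t x δ z : ℝ) : ℝ :=
  (v (t + δ) (x + σ * (√δ * z)) - v t x - vx t x * (σ * (√δ * z))) / δ

section
variable {v vt vx vxx : ℝ → ℝ → ℝ} {σ t x δ : ℝ}

theorem integral_compensatedQuot (hδ : 0 < δ)
    (hint : Integrable (compensatedQuot v vx σ t x δ) (gaussianReal 0 1)) :
    ∫ z, compensatedQuot v vx σ t x δ z ∂gaussianReal 0 1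
      = ((∫ y, v (t + δ) (x + σ * y) ∂gaussianReal 0 δ.toNNReal) - v t x) / δ := by
  have hdecomp : (fun z => v (t + δ) (x + σ * (√δ * z)))
      = fun z => δ * compensatedQuot v vx σ t x δ z + (v t x + vx t x * σ * √δ * z) := by
    funext z
    simp only [compensatedQuot]
    field_simp
    ring
  have hid : Integrable (fun z : ℝ => z) (gaussianReal 0 1) :=
    (memLp_id_gaussianReal 1).integrable le_rfl
  rw [integral_gaussianReal_eq_integral_sqrt_mul hδ (fun y => v (t + δ) (x + σ * y)), hdecomp,
    integral_add (hint.const_mul δ) ((integrable_const _).fun_add (hid.const_mul _)),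
    integral_add (integrable_const _) (hid.const_mul _), integral_const_mul, integral_const_mul,
    integral_id_gaussianReal, integral_const]
  simp only [probReal_univ, one_smul, mul_zero, add_zero]
  field_simp
  ring

theorem abs_compensatedQuot_le {C : ℝ} (hvt : ∀ s y, HasDerivAt (fun s => v s y) (vt s y) s)
    (hvx : ∀ y, HasDerivAt (v t) (vx t y) y) (hvxx : ∀ y, HasDerivAt (vx t) (vxx t y) y)
    (hCt : ∀ s y, |vt s y| ≤ C) (hCxx : ∀ y, |vxx t y| ≤ C) (hδ : 0 < δ) (z : ℝ) :
    |compensatedQuot v vx σ t x δ z| ≤ C * (1 + σ ^ 2 * z ^ 2) := by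
  have hC : 0 ≤ C := (abs_nonneg _).trans (hCxx 0)
  set h := σ * (√δ * z)
  have hsq : |h| * |h| = σ ^ 2 * z ^ 2 * δ := by
    rw [← sq, sq_abs, mul_pow, mul_pow, Real.sq_sqrt hδ.le]
    ring
  have htime : |v (t + δ) (x + h) - v t (x + h)| ≤ C * δ := by
    simpa [abs_of_pos hδ] using abs_sub_sub_mul_le_of_abs_deriv_sub_le (f := fun s => v s (x + h))
      (a := t) (b := t + δ) (c := 0) (fun s _ => hvt s _) fun s _ => by simpa using hCt s _
  have hlip : ∀ u, |vx t u - vx t x| ≤ C * |u - x| := fun u => by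
    simpa using abs_sub_sub_mul_le_of_abs_deriv_sub_le (c := 0) (fun w _ => hvxx w)
      fun w _ => by simpa using hCxx w
  have hspace : |v t (x + h) - v t x - vx t x * h| ≤ C * |h| * |h| := by
    simpa using abs_sub_sub_mul_le_of_abs_deriv_sub_le (a := x) (b := x + h) (c := vx t x)
      (fun u _ => hvx u) fun u hu =>
        (hlip u).trans (mul_le_mul_of_nonneg_left (abs_sub_left_of_mem_uIcc hu) hC)
  rw [compensatedQuot, abs_div, abs_of_pos hδ, div_le_iff₀ hδ]
  calc |v (t + δ) (x + h) - v t x - vx t x * h|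
      = |(v (t + δ) (x + h) - v t (x + h)) + (v t (x + h) - v t x - vx t x * h)| := by ring_nf
    _ ≤ C * δ + C * |h| * |h| := (abs_add_le _ _).trans (add_le_add htime hspace)
    _ = C * (1 + σ ^ 2 * z ^ 2) * δ := by rw [mul_assoc C, hsq]; ring

theorem tendsto_compensatedQuot (hvt : ∀ s y, HasDerivAt (fun s => v s y) (vt s y) s)
    (hvx : ∀ y, HasDerivAt (v t) (vx t y) y) (hvxx : ∀ y, HasDerivAt (vx t) (vxx t y) y)
    (hct : ContinuousAt (Function.uncurry vt) (t, x)) (hcxx : ContinuousAt (vxx t) x) (z : ℝ) :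
    Tendsto (fun δ => compensatedQuot v vx σ t x δ z) (𝓝[>] 0)
      (𝓝 (vt t x + σ ^ 2 / 2 * vxx t x * z ^ 2)) := by
  set h : ℝ → ℝ := fun δ => σ * (√δ * z)
  have hh : Tendsto (fun δ => x + h δ) (𝓝 0) (𝓝 x) := by
    simpa [h] using (((Real.continuous_sqrt.tendsto 0).mul_const z).const_mul σ).const_add x
  have hsq : (fun δ => σ ^ 2 * z ^ 2 * δ) =ᶠ[𝓝[>] 0] fun δ => (x + h δ - x) ^ 2 := by
    filter_upwards [self_mem_nhdsWithin] with δ hδ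
    rw [add_sub_cancel_left, mul_pow, mul_pow, Real.sq_sqrt hδ.le]
    ring
  have htime := (isLittleO_sub_sub_mul_of_continuousAt hvt hct hh).mono
    (nhdsWithin_le_nhds (s := Ioi 0))
  have hspace := ((isLittleO_taylor_two hvx hvxx hcxx).comp_tendsto
    (hh.mono_left nhdsWithin_le_nhds)).trans_isBigO
    (((isBigO_refl (fun δ : ℝ => δ) _).const_mul_left (σ ^ 2 * z ^ 2)).congr' hsq
      EventuallyEq.rfl)
  rw [← tendsto_sub_nhds_zero_iff]
  refine ((htime.add hspace).tendsto_div_nhds_zero).congr' ?_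
  filter_upwards [self_mem_nhdsWithin] with δ hδ
  have hδ0 : δ ≠ 0 := hδ.ne'
  simp only [Function.comp, compensatedQuot, add_sub_cancel_left, h]
  rw [mul_pow σ, mul_pow, Real.sq_sqrt hδ.le]
  field_simp
  ring

theorem tendsto_integral_gaussian_sub_div {C : ℝ}
    (hvt : ∀ s y, HasDerivAt (fun s => v s y) (vt s y) s)
    (hvx : ∀ s y, HasDerivAt (v s) (vx s y) y) (hvxx : ∀ y, HasDerivAt (vx t) (vxx t y) y)
    (hct : ContinuousAt (Function.uncurry vt) (t, x)) (hcxx : ContinuousAt (vxx t) x)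
    (hCt : ∀ s y, |vt s y| ≤ C) (hCxx : ∀ y, |vxx t y| ≤ C) :
    Tendsto (fun δ => ((∫ y, v (t + δ) (x + σ * y) ∂gaussianReal 0 δ.toNNReal) - v t x) / δ)
      (𝓝[>] 0) (𝓝 (vt t x + σ ^ 2 / 2 * vxx t x)) := by
  have hsq : Integrable (fun z : ℝ => z ^ 2) (gaussianReal 0 1) :=
    (memLp_id_gaussianReal 2).integrable_sq
  have hmeas : ∀ δ, AEStronglyMeasurable (compensatedQuot v vx σ t x δ) (gaussianReal 0 1) := by
    intro δ
    have := continuous_iff_continuousAt.2 fun y => (hvx (t + δ) y).continuousAt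
    unfold compensatedQuot
    fun_prop
  have hdom : Integrable (fun z => C * (1 + σ ^ 2 * z ^ 2)) (gaussianReal 0 1) :=
    ((integrable_const 1).add (hsq.const_mul _)).const_mul C
  have hbound : ∀ δ > 0, ∀ z, ‖compensatedQuot v vx σ t x δ z‖ ≤ C * (1 + σ ^ 2 * z ^ 2) :=
    fun δ hδ => abs_compensatedQuot_le hvt (hvx t) hvxx hCt hCxx hδ
  have hlim := tendsto_integral_filter_of_dominated_convergence (l := 𝓝[>] (0 : ℝ)) _
    (Eventually.of_forall hmeas) (eventually_mem_nhdsWithin.mono fun δ hδ =>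
      ae_of_all _ (hbound δ hδ)) hdom
    (ae_of_all _ (tendsto_compensatedQuot (σ := σ) hvt (hvx t) hvxx hct hcxx))
  rw [integral_add (integrable_const _) (hsq.const_mul _), integral_const, integral_const_mul,
    integral_sq_gaussianReal] at hlim
  refine (hlim.congr' ?_).trans_eq (by simp)
  filter_upwards [self_mem_nhdsWithin] with δ hδ
  exact integral_compensatedQuot hδ (hdom.mono' (hmeas δ) (ae_of_all _ (hbound δ hδ)))

end

theorem supersolution_differential_inequality_general (σl σu T : ℝ) (hT1 : T < 1)
    (v vt vx vxx : ℝ → ℝ → ℝ)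
    (hvt : ∀ t x : ℝ, HasDerivAt (fun s => v s x) (vt t x) t)
    (hvx : ∀ t x : ℝ, HasDerivAt (fun y => v t y) (vx t x) x)
    (hvxx : ∀ t x : ℝ, HasDerivAt (fun y => vx t y) (vxx t x) x)
    (hct : Continuous (Function.uncurry vt))
    (hcxx : Continuous (Function.uncurry vxx))
    (hbd : ∃ C : ℝ, ∀ t x : ℝ, |v t x| + |vt t x| + |vx t x| + |vxx t x| ≤ C)
    (hsuper : ∀ σ ∈ Icc σl σu, ∀ t δ x : ℝ, 0 ≤ t → 0 ≤ δ → t + δ ≤ 1 →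
      (∫ y, v (t + δ) (x + σ * y) ∂(gaussianReal 0 δ.toNNReal)) ≤ v t x) :
    ∀ σ ∈ Icc σl σu, ∀ t ∈ Icc (0 : ℝ) T, ∀ x : ℝ,
      vt t x + σ ^ 2 / 2 * vxx t x ≤ 0 := by
  obtain ⟨C, hC⟩ := hbd
  intro σ hσ t ht x
  have hCt : ∀ s y, |vt s y| ≤ C := fun s y => by
    linarith [hC s y, abs_nonneg (v s y), abs_nonneg (vx s y), abs_nonneg (vxx s y)]
  have hCxx : ∀ y, |vxx t y| ≤ C := fun y => by
    linarith [hC t y, abs_nonneg (v t y), abs_nonneg (vt t y), abs_nonneg (vx t y)]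
  have hgen := tendsto_integral_gaussian_sub_div (σ := σ) (x := x) hvt hvx (hvxx t) hct.continuousAt
    (hcxx.comp (Continuous.prodMk_right t)).continuousAt hCt hCxx
  refine le_of_tendsto hgen ?_
  filter_upwards [Ioc_mem_nhdsGT (show (0 : ℝ) < 1 - t by linarith [ht.2])] with δ hδ
  exact div_nonpos_of_nonpos_of_nonneg
    (sub_nonpos.2 (hsuper σ hσ t δ x ht.1 hδ.1.le (by linarith [hδ.2]))) hδ.1.le

/-- A smooth (`C^{1,2}`, bounded) function satisfying the Bellman supersolution
inequality `v(t,x) ≥ E v(t+δ, x + σ w_δ)` against Gaussian increments, for all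
constant `σ ∈ [σ̲, σ̄]`, satisfies `∂_t v + ½ σ² D² v ≤ 0` on `[0,T] × ℝ`. -/
theorem supersolution_differential_inequality (σl σu T : ℝ) (hT0 : 0 ≤ T) (hT1 : T < 1)
    (v vt vx vxx : ℝ → ℝ → ℝ)
    (hvt : ∀ t x : ℝ, HasDerivAt (fun s => v s x) (vt t x) t)
    (hvx : ∀ t x : ℝ, HasDerivAt (fun y => v t y) (vx t x) x)
    (hvxx : ∀ t x : ℝ, HasDerivAt (fun y => vx t y) (vxx t x) x)
    (hct : Continuous (Function.uncurry vt))
    (hcxx : Continuous (Function.uncurry vxx))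
    (hbd : ∃ C : ℝ, ∀ t x : ℝ, |v t x| + |vt t x| + |vx t x| + |vxx t x| ≤ C)
    (hsuper : ∀ σ ∈ Icc σl σu, ∀ t δ x : ℝ, 0 ≤ t → 0 ≤ δ → t + δ ≤ 1 →
      (∫ y, v (t + δ) (x + σ * y) ∂(gaussianReal 0 δ.toNNReal)) ≤ v t x) :
    ∀ σ ∈ Icc σl σu, ∀ t ∈ Icc (0 : ℝ) T, ∀ x : ℝ,
      vt t x + σ ^ 2 / 2 * vxx t x ≤ 0 :=
  supersolution_differential_inequality_general σl σu T hT1 v vt vx vxx hvt hvx hvxx hct hcxx hbd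
    hsuper
end
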